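/- arXiv:2102.06075 — 4 statements merged into one kernel-verified Lean document; each statement's English description precedes it below -/
import Mathlib

section
/- An elementary fusion Q = P|_{A^c} + β P|_A + (1-β)P(A)δ_{μ_A} of a probability measure P satisfies: P is a mean preserving increase in risk of Q, i.e., ∫f dQ ≥ ∫f dP for all concave f: R^d → R. -/
/-!
Split `∫ f dP` over `A` and `Aᶜ`. The fusion leaves the part on `Aᶜ` and a fraction `β` of the
part on `A` unchanged and replaces the remaining `(1 - β) ∫_A f dP` by `(1 - β) P(A) f(μ_A)`,
which is larger by Jensen's inequality for `P` conditioned on `A`.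
-/

open MeasureTheory

section ElementaryFusion

open Set
open scoped ENNReal

variable {E : Type*} [NormedAddCommGroup E] [NormedSpace ℝ E] [MeasurableSpace E]

noncomputable def elementaryFusion (P : Measure E) (A : Set E) (β : ℝ) : Measure E :=
  P.restrict Aᶜ + ENNReal.ofReal β • P.restrict A
    + (ENNReal.ofReal (1 - β) * P A) • Measure.dirac (⨍ x in A, x ∂P)

lemma ConcaveOn.setIntegral_le_measureReal_mul_map_setAverage [FiniteDimensional ℝ E]
    {μ : Measure E} {s : Set E} {f : E → ℝ} (hf : ConcaveOn ℝ univ f) (hs : μ s ≠ ∞)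
    (hid : IntegrableOn id s μ) (hfi : IntegrableOn f s μ) :
    ∫ x in s, f x ∂μ ≤ μ.real s * f (⨍ x in s, x ∂μ) := by
  rcases eq_or_ne (μ s) 0 with hs0 | hs0
  · simp [Measure.restrict_eq_zero.mpr hs0, measureReal_def, hs0]
  have hjensen : ⨍ x in s, f x ∂μ ≤ f (⨍ x in s, x ∂μ) :=
    hf.le_map_set_average (f := id) (hf.continuousOn isOpen_univ) isClosed_univ hs0 hs
      (ae_of_all _ fun _ ↦ mem_univ _) hid hfi
  have hmass : 0 < μ.real s := ENNReal.toReal_pos hs0 hs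
  rw [setAverage_eq, smul_eq_mul] at hjensen
  calc ∫ x in s, f x ∂μ = μ.real s * ((μ.real s)⁻¹ * ∫ x in s, f x ∂μ) := by
        field_simp
    _ ≤ μ.real s * f (⨍ x in s, x ∂μ) := by gcongr

lemma integral_elementaryFusion [BorelSpace E] {P : Measure E} [IsFiniteMeasure P] {A : Set E}
    {β : ℝ} (hβ : β ∈ Icc 0 1) {f : E → ℝ} (hf : Integrable f P) :
    ∫ x, f x ∂elementaryFusion P A β = ∫ x in Aᶜ, f x ∂P + β * ∫ x in A, f x ∂P
      + (1 - β) * (P.real A * f (⨍ x in A, x ∂P)) := by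
  have hfβA : Integrable f (ENNReal.ofReal β • P.restrict A) :=
    hf.restrict.smul_measure ENNReal.ofReal_ne_top
  have hfδ : Integrable f ((ENNReal.ofReal (1 - β) * P A) • Measure.dirac (⨍ x in A, x ∂P)) :=
    (integrable_dirac enorm_lt_top).smul_measure (by finiteness)
  rw [elementaryFusion, integral_add_measure (hf.restrict.add_measure hfβA) hfδ,
    integral_add_measure hf.restrict hfβA, integral_smul_measure, integral_smul_measure,
    integral_dirac, ENNReal.toReal_ofReal hβ.1, ENNReal.toReal_mul,
    ENNReal.toReal_ofReal (sub_nonneg.2 hβ.2), ← measureReal_def]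
  simp only [smul_eq_mul, mul_assoc]

theorem ConcaveOn.integral_le_integral_elementaryFusion [FiniteDimensional ℝ E] [BorelSpace E]
    {P : Measure E} [IsFiniteMeasure P] {A : Set E} (hA : MeasurableSet A) {β : ℝ}
    (hβ : β ∈ Icc 0 1) (hid : Integrable id P) {f : E → ℝ} (hf : ConcaveOn ℝ univ f)
    (hfi : Integrable f P) :
    ∫ x, f x ∂P ≤ ∫ x, f x ∂elementaryFusion P A β := by
  have hjensen := hf.setIntegral_le_measureReal_mul_map_setAverage (measure_ne_top P A)
    hid.integrableOn hfi.integrableOn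
  rw [integral_elementaryFusion hβ hfi, ← integral_add_compl hA hfi]
  linarith [mul_le_mul_of_nonneg_left hjensen (sub_nonneg.2 hβ.2)]

end ElementaryFusion

theorem stmt_4_general {d : ℕ}
    (P : Measure (EuclideanSpace ℝ (Fin d))) [IsProbabilityMeasure P]
    (hPmean : Integrable id P)
    (A : Set (EuclideanSpace ℝ (Fin d))) (hA : MeasurableSet A)
    (β : ℝ) (hβ : β ∈ Set.Icc (0:ℝ) 1)
    (μA : EuclideanSpace ℝ (Fin d)) (hμA : μA = (P A).toReal⁻¹ • ∫ x in A, x ∂P)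
    (Q : Measure (EuclideanSpace ℝ (Fin d)))
    (hQ : Q = P.restrict Aᶜ + ENNReal.ofReal β • P.restrict A
      + (ENNReal.ofReal (1 - β) * P A) • Measure.dirac μA)
    (f : EuclideanSpace ℝ (Fin d) → ℝ) (hf : ConcaveOn ℝ Set.univ f)
    (hfP : Integrable f P) :
    ∫ x, f x ∂P ≤ ∫ x, f x ∂Q := by
  have hQ_fusion : Q = elementaryFusion P A β := by
    rw [hQ, hμA, elementaryFusion, setAverage_eq]
    rfl
  rw [hQ_fusion]
  exact hf.integral_le_integral_elementaryFusion hA hβ hPmean hfP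

/-- An elementary fusion Q = P|_{Aᶜ} + β P|_A + (1-β)P(A) δ_{μ_A} of a
probability measure P satisfies ∫ f dQ ≥ ∫ f dP for all concave f : ℝ^d → ℝ, i.e. P is a
mean preserving increase in risk of Q. -/
theorem stmt_4 {d : ℕ}
    (P : Measure (EuclideanSpace ℝ (Fin d))) [IsProbabilityMeasure P]
    (hPmean : Integrable id P)
    (A : Set (EuclideanSpace ℝ (Fin d))) (hA : MeasurableSet A) (hApos : 0 < P A)
    (β : ℝ) (hβ : β ∈ Set.Icc (0:ℝ) 1)
    (μA : EuclideanSpace ℝ (Fin d)) (hμA : μA = (P A).toReal⁻¹ • ∫ x in A, x ∂P)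
    (Q : Measure (EuclideanSpace ℝ (Fin d)))
    (hQ : Q = P.restrict Aᶜ + ENNReal.ofReal β • P.restrict A
      + (ENNReal.ofReal (1 - β) * P A) • Measure.dirac μA)
    (f : EuclideanSpace ℝ (Fin d) → ℝ) (hf : ConcaveOn ℝ Set.univ f)
    (hfP : Integrable f P) :
    ∫ x, f x ∂P ≤ ∫ x, f x ∂Q :=
  stmt_4_general P hPmean A hA β hβ μA hμA Q hQ f hf hfP
end

section
/- For univariate random variables X and Y with quantile functions Q_X and Q_Y, X is Bickel-Lehmann less dispersed than Y (i.e., Q_Y - Q_X is nondecreasing on (0,1)) if and only if there exists a random variable Z comonotonic with X such that Y has the same distribution as X + Z. -/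
open MeasureTheory

/-- The (upper) quantile function of a distribution on ℝ. -/
noncomputable def quantile (ν : Measure ℝ) (t : ℝ) : ℝ :=
  sInf {x : ℝ | ν (Set.Iic x) > ENNReal.ofReal t}

/-- The uniform distribution on (0,1). -/
noncomputable def uniform01 : Measure ℝ := volume.restrict (Set.Ioo 0 1)

/-!
Both directions go through the representation of a law as the image of the uniform law on
`(0,1)` under its quantile function.  If `Q_Y - Q_X` is nondecreasing, then `X' = Q_X(U)` and
`Z = (Q_Y - Q_X)(U)` are comonotonic and `X' + Z = Q_Y(U)` has the law of `Y`.  Conversely,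
`X' + Z = G(U)` with `G = Q_X + Q_Z` nondecreasing, and the quantile function of `G(U)` is squeezed
between `G(t)` and `G(t')` for `t < t'`; together with the right-continuity of `Q_X` this gives
`Q_Y(s) - Q_X(s) ≤ Q_Y(t) - Q_X(t)`.
-/

open Set Filter Topology ProbabilityTheory

instance : IsProbabilityMeasure uniform01 :=
  ⟨by rw [uniform01, Measure.restrict_apply_univ, Real.volume_Ioo]; norm_num⟩

section Quantile

variable (ν : Measure ℝ)

lemma nonempty_setOf_lt_cdf {t : ℝ} (ht : t < 1) : {x : ℝ | t < cdf ν x}.Nonempty :=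
  ((tendsto_cdf_atTop ν).eventually_const_lt ht).exists

lemma bddBelow_setOf_lt_cdf {t : ℝ} (ht : 0 < t) : BddBelow {x : ℝ | t < cdf ν x} := by
  obtain ⟨x₀, hx₀⟩ := ((tendsto_cdf_atBot ν).eventually_lt_const ht).exists
  refine ⟨x₀, fun y hy => le_of_not_gt fun hyx => ?_⟩
  exact (mem_ofPred_eq ▸ hy).not_ge ((monotone_cdf ν hyx.le).trans hx₀.le)

variable [IsProbabilityMeasure ν]

lemma quantile_eq_sInf_cdf {t : ℝ} (ht : 0 ≤ t) :
    quantile ν t = sInf {x : ℝ | t < cdf ν x} := by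
  unfold quantile
  congr 1
  ext x
  simp only [mem_ofPred_eq, gt_iff_lt, ← ofReal_cdf ν x]
  exact ENNReal.ofReal_lt_ofReal_iff_of_nonneg ht

lemma quantile_le_of_lt_cdf {t x : ℝ} (ht : 0 < t) (hx : t < cdf ν x) : quantile ν t ≤ x := by
  rw [quantile_eq_sInf_cdf ν ht.le]
  exact csInf_le (bddBelow_setOf_lt_cdf ν ht) hx

lemma le_cdf_quantile {t : ℝ} (ht : t ∈ Ioo 0 1) : t ≤ cdf ν (quantile ν t) := by
  have hright : ∀ y ∈ Ioi (quantile ν t), t ≤ cdf ν y := by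
    intro y hy
    rw [mem_Ioi, quantile_eq_sInf_cdf ν ht.1.le] at hy
    obtain ⟨z, hz, hzy⟩ := exists_lt_of_csInf_lt (nonempty_setOf_lt_cdf ν ht.2) hy
    exact (le_of_lt hz).trans (monotone_cdf ν hzy.le)
  have hcont : Tendsto (cdf ν) (𝓝[>] (quantile ν t)) (𝓝 (cdf ν (quantile ν t))) :=
    ((cdf ν).right_continuous _).mono_left (nhdsWithin_mono _ Ioi_subset_Ici_self)
  exact ge_of_tendsto hcont (eventually_nhdsWithin_of_forall hright)

lemma monotoneOn_quantile : MonotoneOn (quantile ν) (Ioo 0 1) := by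
  intro s hs t ht hst
  rw [quantile_eq_sInf_cdf ν hs.1.le, quantile_eq_sInf_cdf ν ht.1.le]
  exact le_csInf (nonempty_setOf_lt_cdf ν ht.2)
    fun x hx => csInf_le (bddBelow_setOf_lt_cdf ν hs.1) (hst.trans_lt hx)

lemma continuousWithinAt_quantile_Ioi {t : ℝ} (ht : t ∈ Ioo 0 1) :
    ContinuousWithinAt (quantile ν) (Ioi t) t := by
  refine tendsto_order.2 ⟨fun a ha => ?_, fun b hb => ?_⟩
  · filter_upwards [Ioo_mem_nhdsGT ht.2] with s hs
    exact ha.trans_le (monotoneOn_quantile ν ht ⟨ht.1.trans hs.1, hs.2⟩ hs.1.le)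
  · rw [quantile_eq_sInf_cdf ν ht.1.le] at hb
    obtain ⟨x, hx, hxb⟩ := exists_lt_of_csInf_lt (nonempty_setOf_lt_cdf ν ht.2) hb
    filter_upwards [Ioo_mem_nhdsGT hx] with s hs
    exact (quantile_le_of_lt_cdf ν (ht.1.trans hs.1) hs.2).trans_lt hxb

end Quantile

section Uniform01

variable {G : ℝ → ℝ}

lemma MonotoneOn.aemeasurable_uniform01 (hG : MonotoneOn G (Ioo 0 1)) :
    AEMeasurable G uniform01 :=
  aemeasurable_restrict_of_monotoneOn measurableSet_Ioo hG

lemma map_uniform01_Iic (hG : AEMeasurable G uniform01) (x : ℝ) :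
    uniform01.map G (Iic x) = volume (G ⁻¹' Iic x ∩ Ioo 0 1) := by
  rw [Measure.map_apply_of_aemeasurable hG measurableSet_Iic, uniform01,
    Measure.restrict_apply' measurableSet_Ioo]

lemma map_quantile_uniform01 (ν : Measure ℝ) [IsProbabilityMeasure ν] :
    uniform01.map (quantile ν) = ν := by
  have hQ := (monotoneOn_quantile ν).aemeasurable_uniform01
  have : IsProbabilityMeasure (uniform01.map (quantile ν)) := Measure.isProbabilityMeasure_map hQ
  refine Measure.ext_of_Iic _ _ fun x => ?_
  have hlower : Ioo 0 (cdf ν x) ⊆ quantile ν ⁻¹' Iic x ∩ Ioo 0 1 := fun u hu =>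
    ⟨quantile_le_of_lt_cdf ν hu.1 hu.2, hu.1, hu.2.trans_le (cdf_le_one ν x)⟩
  have hupper : quantile ν ⁻¹' Iic x ∩ Ioo 0 1 ⊆ Ioc 0 (cdf ν x) := fun u ⟨hu, hu01⟩ =>
    ⟨hu01.1, (le_cdf_quantile ν hu01).trans (monotone_cdf ν hu)⟩
  have h₁ := measure_mono (μ := volume) hlower
  have h₂ := measure_mono (μ := volume) hupper
  rw [Real.volume_Ioo, sub_zero] at h₁
  rw [Real.volume_Ioc, sub_zero] at h₂
  rw [map_uniform01_Iic hQ, ← ofReal_cdf]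
  exact le_antisymm h₂ h₁

variable (hG : MonotoneOn G (Ioo 0 1))
include hG

lemma le_quantile_map_uniform01 {t : ℝ} (ht : t ∈ Ioo 0 1) :
    G t ≤ quantile (uniform01.map G) t := by
  have : IsProbabilityMeasure (uniform01.map G) :=
    Measure.isProbabilityMeasure_map hG.aemeasurable_uniform01
  rw [quantile_eq_sInf_cdf _ ht.1.le]
  refine le_csInf (nonempty_setOf_lt_cdf _ ht.2) fun x hx => le_of_not_gt fun hxG => ?_
  have hsub : G ⁻¹' Iic x ∩ Ioo 0 1 ⊆ Ioc 0 t := fun u ⟨hu, hu01⟩ =>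
    ⟨hu01.1, le_of_not_gt fun htu => (hG ht hu01 htu.le).not_gt (hxG.trans_le' hu)⟩
  have hle := measure_mono (μ := volume) hsub
  rw [Real.volume_Ioc, sub_zero, ← map_uniform01_Iic hG.aemeasurable_uniform01, ← ofReal_cdf,
    ENNReal.ofReal_le_ofReal_iff ht.1.le] at hle
  exact hx.not_ge hle

lemma quantile_map_uniform01_le {t t' : ℝ} (ht : t ∈ Ioo 0 1) (ht' : t' ∈ Ioo 0 1)
    (htt' : t < t') : quantile (uniform01.map G) t ≤ G t' := by
  have : IsProbabilityMeasure (uniform01.map G) :=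
    Measure.isProbabilityMeasure_map hG.aemeasurable_uniform01
  refine quantile_le_of_lt_cdf _ ht.1 (htt'.trans_le ?_)
  have hsub : Ioo 0 t' ⊆ G ⁻¹' Iic (G t') ∩ Ioo 0 1 := fun u hu =>
    ⟨hG ⟨hu.1, hu.2.trans ht'.2⟩ ht' hu.2.le, hu.1, hu.2.trans ht'.2⟩
  have hle := measure_mono (μ := volume) hsub
  rwa [Real.volume_Ioo, sub_zero, ← map_uniform01_Iic hG.aemeasurable_uniform01, ← ofReal_cdf,
    ENNReal.ofReal_le_ofReal_iff (cdf_nonneg _ _)] at hle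

/-- The two sides can only differ at the countably many discontinuities of `G`. -/
lemma ae_eq_quantile_map_uniform01 : G =ᵐ[uniform01] quantile (uniform01.map G) := by
  have hmem : ∀ᵐ u ∂uniform01, u ∈ Ioo (0 : ℝ) 1 := ae_restrict_mem measurableSet_Ioo
  filter_upwards [hmem, ae_restrict_of_ae (hG.countable_not_continuousWithinAt.ae_notMem volume)]
    with u hu hcont
  refine le_antisymm (le_quantile_map_uniform01 hG hu) ?_
  have hright : ContinuousWithinAt G (Ioi u) u := by
    rw [← continuousWithinAt_Ioo_iff_Ioi hu.2]
    exact (not_not.1 fun h => hcont ⟨hu, h⟩).mono (Ioo_subset_Ioo_left hu.1.le)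
  refine ge_of_tendsto hright ?_
  filter_upwards [Ioo_mem_nhdsGT hu.2] with t' ht'
  exact quantile_map_uniform01_le hG hu ⟨hu.1.trans ht'.1, ht'.2⟩ ht'.1

lemma ae_eq_quantile_map_uniform01_of_ae_eq {G' : ℝ → ℝ} (hG' : G' =ᵐ[uniform01] G) :
    G' =ᵐ[uniform01] quantile (uniform01.map G') := by
  rw [Measure.map_congr hG']
  exact hG'.trans (ae_eq_quantile_map_uniform01 hG)

end Uniform01

lemma monotoneOn_quantile_map_add_sub (μ : Measure ℝ) [IsProbabilityMeasure μ] {H : ℝ → ℝ}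
    (hH : MonotoneOn H (Ioo 0 1)) :
    MonotoneOn (fun u => quantile (uniform01.map fun v => quantile μ v + H v) u - quantile μ u)
      (Ioo 0 1) := by
  set G := fun v => quantile μ v + H v
  have hG : MonotoneOn G (Ioo 0 1) := (monotoneOn_quantile μ).add hH
  set Q := quantile (uniform01.map G)
  intro s hs t ht hst
  rcases hst.eq_or_lt with rfl | hlt
  · rfl
  have hbound : ∀ s' ∈ Ioo s t, Q s ≤ quantile μ s' + (Q t - quantile μ t) := by
    intro s' hs'
    have hs'01 : s' ∈ Ioo 0 1 := ⟨hs.1.trans hs'.1, hs'.2.trans ht.2⟩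
    have h₁ := quantile_map_uniform01_le hG hs hs'01 hs'.1
    have h₂ := le_quantile_map_uniform01 hG ht
    have h₃ := hH hs'01 ht hs'.2.le
    simp only [G] at h₁ h₂
    linarith
  -- let `s' ↓ s`, using the right-continuity of the quantile function
  have hlim := (continuousWithinAt_quantile_Ioi μ hs).tendsto.add_const (Q t - quantile μ t)
  have := ge_of_tendsto hlim (mem_of_superset (Ioo_mem_nhdsGT hlt) hbound)
  simp only at this ⊢
  linarith

lemma monotoneOn_quantile_add_sub_of_comonotonic {Ω : Type*} [MeasurableSpace Ω]
    {P : Measure Ω} [IsProbabilityMeasure P] {X Z U : Ω → ℝ} (hX : Measurable X)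
    (hZ : Measurable Z) (hU : Measurable U) (hUdist : P.map U = uniform01)
    (hXU : ∀ᵐ ω ∂P, X ω = quantile (P.map X) (U ω))
    (hZU : ∀ᵐ ω ∂P, Z ω = quantile (P.map Z) (U ω)) :
    MonotoneOn (fun u => quantile (P.map fun ω => X ω + Z ω) u - quantile (P.map X) u)
      (Ioo 0 1) := by
  have : IsProbabilityMeasure (P.map X) := Measure.isProbabilityMeasure_map hX.aemeasurable
  have : IsProbabilityMeasure (P.map Z) := Measure.isProbabilityMeasure_map hZ.aemeasurable
  set G := fun v => quantile (P.map X) v + quantile (P.map Z) v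
  have hG : MonotoneOn G (Ioo 0 1) :=
    (monotoneOn_quantile (P.map X)).add (monotoneOn_quantile (P.map Z))
  have hsum : P.map (fun ω => X ω + Z ω) = uniform01.map G :=
    calc P.map (fun ω => X ω + Z ω) = P.map (G ∘ U) :=
          Measure.map_congr <| by
            filter_upwards [hXU, hZU] with ω h₁ h₂ using congrArg₂ _ h₁ h₂
      _ = (P.map U).map G :=
          (AEMeasurable.map_map_of_aemeasurable (hUdist ▸ hG.aemeasurable_uniform01)
            hU.aemeasurable).symm
      _ = uniform01.map G := by rw [hUdist]
  rw [hsum]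
  exact monotoneOn_quantile_map_add_sub (P.map X) (monotoneOn_quantile (P.map Z))

lemma exists_comonotonic_of_monotoneOn_quantile_sub (μ ν : Measure ℝ) [IsProbabilityMeasure μ]
    [IsProbabilityMeasure ν] (h : MonotoneOn (fun u => quantile ν u - quantile μ u) (Ioo 0 1)) :
    ∃ X Z : ℝ → ℝ, Measurable X ∧ Measurable Z ∧ uniform01.map X = μ ∧
      X =ᵐ[uniform01] quantile (uniform01.map X) ∧
      Z =ᵐ[uniform01] quantile (uniform01.map Z) ∧ uniform01.map (X + Z) = ν := by
  have hQ := (monotoneOn_quantile μ).aemeasurable_uniform01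
  have hD := h.aemeasurable_uniform01
  refine ⟨hQ.mk, hD.mk, hQ.measurable_mk, hD.measurable_mk, ?_,
    ae_eq_quantile_map_uniform01_of_ae_eq (monotoneOn_quantile μ) hQ.ae_eq_mk.symm,
    ae_eq_quantile_map_uniform01_of_ae_eq h hD.ae_eq_mk.symm, ?_⟩
  · rw [Measure.map_congr hQ.ae_eq_mk.symm, map_quantile_uniform01]
  · calc uniform01.map (hQ.mk + hD.mk) = uniform01.map (quantile ν) :=
          Measure.map_congr <| by
            filter_upwards [hQ.ae_eq_mk, hD.ae_eq_mk] with u h₁ h₂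
            simp only [Pi.add_apply, ← h₁, ← h₂, add_sub_cancel]
      _ = ν := map_quantile_uniform01 ν

theorem stmt_6_general {Ω : Type*} [MeasurableSpace Ω] (P : Measure Ω) [IsProbabilityMeasure P]
    (X Y : Ω → ℝ) (hX : Measurable X) (hY : Measurable Y) :
    MonotoneOn (fun u => quantile (P.map Y) u - quantile (P.map X) u) (Set.Ioo 0 1)
    ↔ ∃ (Ω' : Type) (_ : MeasurableSpace Ω') (P' : Measure Ω') (X' Z U : Ω' → ℝ),
        IsProbabilityMeasure P' ∧ Measurable X' ∧ Measurable Z ∧ Measurable U ∧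
        P'.map X' = P.map X ∧ P'.map U = uniform01 ∧
        (∀ᵐ ω ∂P', X' ω = quantile (P'.map X') (U ω)) ∧
        (∀ᵐ ω ∂P', Z ω = quantile (P'.map Z) (U ω)) ∧
        P'.map (fun ω => X' ω + Z ω) = P.map Y := by
  have : IsProbabilityMeasure (P.map X) := Measure.isProbabilityMeasure_map hX.aemeasurable
  have : IsProbabilityMeasure (P.map Y) := Measure.isProbabilityMeasure_map hY.aemeasurable
  constructor
  · intro h
    obtain ⟨X', Z, hX', hZ, hX'dist, hX'U, hZU, hsum⟩ :=
      exists_comonotonic_of_monotoneOn_quantile_sub (P.map X) (P.map Y) h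
    exact ⟨ℝ, _, uniform01, X', Z, id, inferInstance, hX', hZ, measurable_id, hX'dist,
      Measure.map_id, hX'U, hZU, hsum⟩
  · rintro ⟨Ω', _, P', X', Z, U, _, hX', hZ, hU, hX'dist, hUdist, hX'U, hZU, hsum⟩
    rw [← hX'dist, ← hsum]
    exact monotoneOn_quantile_add_sub_of_comonotonic hX' hZ hU hUdist hX'U hZU

/-- Landsberger–Meilijson: X is Bickel-Lehmann less dispersed than Y
(Q_Y - Q_X nondecreasing on (0,1)) iff there exists Z comonotonic with (a copy of) X
such that Y =_d X + Z. -/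
theorem stmt_6 {Ω : Type*} [MeasurableSpace Ω] (P : Measure Ω) [IsProbabilityMeasure P]
    (X Y : Ω → ℝ) (hX : Measurable X) (hY : Measurable Y)
    (hXi : Integrable X P) (hYi : Integrable Y P) :
    MonotoneOn (fun u => quantile (P.map Y) u - quantile (P.map X) u) (Set.Ioo 0 1)
    ↔ ∃ (Ω' : Type) (_ : MeasurableSpace Ω') (P' : Measure Ω') (X' Z U : Ω' → ℝ),
        IsProbabilityMeasure P' ∧ Measurable X' ∧ Measurable Z ∧ Measurable U ∧
        P'.map X' = P.map X ∧ P'.map U = uniform01 ∧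
        (∀ᵐ ω ∂P', X' ω = quantile (P'.map X') (U ω)) ∧
        (∀ᵐ ω ∂P', Z ω = quantile (P'.map Z) (U ω)) ∧
        P'.map (fun ω => X' ω + Z ω) = P.map Y :=
  stmt_6_general P X Y hX hY
end

section
/- If X and Z are μ-comonotonic random vectors with densities (X = Q_X(U), Z = Q_Z(U) for a common U =_d μ), then X is μ-Bickel-Lehmann less dispersed than X + Z. -/
/-!
Comonotonicity makes `X + Z` the image of `U` under `QX + QZ = ∇(VX + VZ)`, so the two gradients
of convex functions `QXZ = ∇W` and `QX + QZ` push `μ` to the same law. Such gradients agree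
`μ`-a.e. (McCann's uniqueness, here without any moment assumption), and then
`QXZ - QX = QZ = ∇VZ`.

For the uniqueness, let `f = ∇Φ`, `g = ∇Ψ` and `D = Ψ* - Φ*` with `*` the Fenchel conjugate.
Fenchel–Young gives `D (g x) ≤ Φ x - Ψ x ≤ D (f x)`. After composing with a bounded increasing
map `D ∘ f` and `D ∘ g` are integrable with the same integral, because `f` and `g` have the same
law; hence `D (g x) = Φ x - Ψ x` a.e. This says `Φ* (g x) + Φ x = ⟪x, g x⟫`, i.e. `g x` is a
subgradient of `Φ` at `x`, so it equals `∇Φ x = f x`.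
-/

open MeasureTheory Set Filter Topology InnerProductSpace
open scoped RealInnerProductSpace

section Rademacher

variable {E F : Type*} [NormedAddCommGroup E] [NormedSpace ℝ E] [FiniteDimensional ℝ E]
  [MeasurableSpace E] [BorelSpace E] [NormedAddCommGroup F] [NormedSpace ℝ F]
  [FiniteDimensional ℝ F] {μ : Measure E} [μ.IsAddHaarMeasure]

theorem LocallyLipschitz.ae_differentiableAt {f : E → F} (hf : LocallyLipschitz f) :
    ∀ᵐ x ∂μ, DifferentiableAt ℝ f x := by
  choose K t ht hK using hf
  obtain ⟨T, hTc, hTu⟩ := countable_cover_nhds fun x => interior_mem_nhds.2 (ht x)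
  have H : ∀ x ∈ T, ∀ᵐ y ∂μ, y ∈ interior (t x) → DifferentiableAt ℝ f y := fun x _ => by
    filter_upwards [((hK x).mono interior_subset).ae_differentiableWithinAt_of_mem] with y hy hyi
    exact (hy hyi).differentiableAt (isOpen_interior.mem_nhds hyi)
  filter_upwards [(ae_ball_iff hTc).2 H] with y hy
  obtain ⟨x, hxT, hyx⟩ := mem_iUnion₂.1 (hTu ▸ mem_univ y)
  exact hy x hxT hyx

theorem ConvexOn.ae_differentiableAt {f : E → ℝ} (hf : ConvexOn ℝ univ f) :
    ∀ᵐ x ∂μ, DifferentiableAt ℝ f x :=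
  hf.locallyLipschitz.ae_differentiableAt

end Rademacher

section Gradient

variable {E : Type*} [NormedAddCommGroup E] [InnerProductSpace ℝ E] [CompleteSpace E]
  {f : E → ℝ} {x p q : E}

theorem ConvexOn.add_inner_sub_le_of_hasGradientAt (hf : ConvexOn ℝ univ f)
    (h : HasGradientAt f p x) (z : E) : f x + ⟪p, z - x⟫ ≤ f z := by
  let ℓ : ℝ →ᵃ[ℝ] E := AffineMap.lineMap x z
  have hline : ConvexOn ℝ univ (f ∘ ℓ) := by simpa using hf.comp_affineMap ℓ
  have hderiv : HasDerivAt (f ∘ ℓ) ⟪p, z - x⟫ 0 := by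
    have hℓ : HasDerivAt ℓ (z - x) 0 := AffineMap.hasDerivAt_lineMap
    have hf' := (AffineMap.lineMap_apply_zero (k := ℝ) x z).symm ▸ h.hasFDerivAt
    simpa [ℓ] using hf'.comp_hasDerivAt 0 hℓ
  have := hline.le_slope_of_hasDerivAt (mem_univ 0) (mem_univ 1) zero_lt_one hderiv
  simp only [slope, ℓ, Function.comp_apply, AffineMap.lineMap_apply_zero,
    AffineMap.lineMap_apply_one, sub_zero, inv_one, one_smul, vsub_eq_sub] at this
  linarith

theorem HasGradientAt.eq_of_forall_add_inner_sub_le (h : HasGradientAt f q x)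
    (hp : ∀ z, f x + ⟪p, z - x⟫ ≤ f z) : p = q := by
  have hmin : IsLocalMin (fun z => f z - ⟪p, z⟫) x := by
    refine IsMinOn.isLocalMin (fun z _ => ?_) univ_mem
    have := hp z
    simp only [mem_ofPred_eq, inner_sub_right] at this ⊢
    linarith
  have hderiv : HasFDerivAt (fun z => f z - ⟪p, z⟫) (toDual ℝ E (q - p)) x := by
    rw [map_sub]
    exact h.hasFDerivAt.sub (toDual ℝ E p).hasFDerivAt
  have := hmin.hasFDerivAt_eq_zero hderiv
  rwa [LinearIsometryEquiv.map_eq_zero_iff, sub_eq_zero, eq_comm] at this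

theorem HasGradientAt.add {g : E → ℝ} (hf : HasGradientAt f p x) (hg : HasGradientAt g q x) :
    HasGradientAt (f + g) (p + q) x := by
  rw [hasGradientAt_iff_hasFDerivAt, map_add]
  exact hf.hasFDerivAt.add hg.hasFDerivAt

theorem measurable_gradient [MeasurableSpace E] [BorelSpace E] (f : E → ℝ) :
    Measurable (gradient f) :=
  (toDual ℝ E).symm.continuous.measurable.comp (measurable_fderiv ℝ f)

end Gradient

noncomputable section FenchelConjugate

variable {E : Type*} [NormedAddCommGroup E] [InnerProductSpace ℝ E]

def fenchelConjugate (f : E → ℝ) (y : E) : EReal :=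
  ⨆ x, ((⟪x, y⟫ - f x : ℝ) : EReal)

theorem le_fenchelConjugate (f : E → ℝ) (x y : E) :
    ((⟪x, y⟫ - f x : ℝ) : EReal) ≤ fenchelConjugate f y :=
  le_iSup (fun x => ((⟪x, y⟫ - f x : ℝ) : EReal)) x

theorem lowerSemicontinuous_fenchelConjugate (f : E → ℝ) :
    LowerSemicontinuous (fenchelConjugate f) :=
  lowerSemicontinuous_iSup fun _ => (continuous_coe_real_ereal.comp
    ((continuous_const.inner continuous_id).sub continuous_const)).lowerSemicontinuous

theorem measurable_fenchelConjugate [MeasurableSpace E] [OpensMeasurableSpace E] (f : E → ℝ) :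
    Measurable (fenchelConjugate f) :=
  (lowerSemicontinuous_fenchelConjugate f).measurable

variable [CompleteSpace E] {f : E → ℝ} {x p q : E}

theorem ConvexOn.fenchelConjugate_eq_of_hasGradientAt (hf : ConvexOn ℝ univ f)
    (h : HasGradientAt f p x) : fenchelConjugate f p = ((⟪x, p⟫ - f x : ℝ) : EReal) := by
  refine le_antisymm (iSup_le fun z => EReal.coe_le_coe_iff.2 ?_) (le_fenchelConjugate f x p)
  have := hf.add_inner_sub_le_of_hasGradientAt h z
  rw [inner_sub_right] at this
  linarith [real_inner_comm p z, real_inner_comm p x]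

theorem HasGradientAt.eq_of_fenchelConjugate_le (h : HasGradientAt f q x)
    (hp : fenchelConjugate f p ≤ ((⟪x, p⟫ - f x : ℝ) : EReal)) : p = q := by
  refine h.eq_of_forall_add_inner_sub_le fun z => ?_
  have := EReal.coe_le_coe_iff.1 ((le_fenchelConjugate f z p).trans hp)
  rw [inner_sub_right]
  linarith [real_inner_comm p z, real_inner_comm p x]

end FenchelConjugate

noncomputable def EReal.orderEmbeddingUnitInterval : EReal ↪o Icc (0 : ℝ) 1 :=
  (OrderEmbedding.ofStrictMono EReal.exp EReal.exp_strictMono).trans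
    ENNReal.orderIsoUnitIntervalBirational.toOrderEmbedding

theorem EReal.eq_coe_of_coe_sub_eq {a c : ℝ} {b : EReal} (h : (a : EReal) - b = c) :
    b = ((a - c : ℝ) : EReal) := by
  induction b with
  | bot => simp at h
  | top => simp at h
  | coe b =>
    rw [← EReal.coe_sub, EReal.coe_eq_coe_iff] at h
    rw [← h, sub_sub_cancel]

section GradientPushforward

variable {E : Type*} [NormedAddCommGroup E] [InnerProductSpace ℝ E] [CompleteSpace E]
  {Φ Ψ : E → ℝ} {x p q : E}

theorem ConvexOn.coe_sub_le_fenchelConjugate_sub (hΦ : ConvexOn ℝ univ Φ)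
    (h : HasGradientAt Φ p x) (Ψ : E → ℝ) :
    ((Φ x - Ψ x : ℝ) : EReal) ≤ fenchelConjugate Ψ p - fenchelConjugate Φ p := by
  rw [hΦ.fenchelConjugate_eq_of_hasGradientAt h, ← sub_sub_sub_cancel_left (Ψ x) (Φ x) ⟪x, p⟫,
    EReal.coe_sub]
  exact EReal.sub_le_sub (le_fenchelConjugate Ψ x p) le_rfl

theorem ConvexOn.fenchelConjugate_sub_le_coe_sub (hΨ : ConvexOn ℝ univ Ψ)
    (h : HasGradientAt Ψ p x) (Φ : E → ℝ) :
    fenchelConjugate Ψ p - fenchelConjugate Φ p ≤ ((Φ x - Ψ x : ℝ) : EReal) := by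
  rw [hΨ.fenchelConjugate_eq_of_hasGradientAt h, ← sub_sub_sub_cancel_left (Ψ x) (Φ x) ⟪x, p⟫,
    EReal.coe_sub]
  exact EReal.sub_le_sub le_rfl (le_fenchelConjugate Φ x p)

theorem HasGradientAt.eq_of_fenchelConjugate_sub_eq (hΦ : HasGradientAt Φ q x)
    (hΨ : ConvexOn ℝ univ Ψ) (h : HasGradientAt Ψ p x)
    (heq : fenchelConjugate Ψ p - fenchelConjugate Φ p = ((Φ x - Ψ x : ℝ) : EReal)) : p = q := by
  rw [hΨ.fenchelConjugate_eq_of_hasGradientAt h] at heq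
  refine hΦ.eq_of_fenchelConjugate_le ((EReal.eq_coe_of_coe_sub_eq heq).trans_le ?_)
  rw [sub_sub_sub_cancel_right]

theorem aemeasurable_of_ae_hasGradientAt [MeasurableSpace E] [BorelSpace E] {μ : Measure E}
    {f : E → E} (hf : ∀ᵐ x ∂μ, HasGradientAt Φ (f x) x) : AEMeasurable f μ :=
  (measurable_gradient Φ).aemeasurable.congr (hf.mono fun _ hx => hx.gradient)

theorem ae_eq_of_map_eq_of_ae_hasGradientAt [MeasurableSpace E] [BorelSpace E] {μ : Measure E}
    [IsFiniteMeasure μ] (hΦ : ConvexOn ℝ univ Φ) (hΨ : ConvexOn ℝ univ Ψ) {f g : E → E}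
    (hf : ∀ᵐ x ∂μ, HasGradientAt Φ (f x) x) (hg : ∀ᵐ x ∂μ, HasGradientAt Ψ (g x) x)
    (hmap : μ.map f = μ.map g) : f =ᵐ[μ] g := by
  let ι : EReal → ℝ := fun t => EReal.orderEmbeddingUnitInterval t
  let ξ : E → ℝ := fun y => ι (fenchelConjugate Ψ y - fenchelConjugate Φ y)
  have hι : StrictMono ι :=
    (Subtype.strictMono_coe _).comp EReal.orderEmbeddingUnitInterval.strictMono
  have hξ : Measurable ξ := hι.monotone.measurable.comp
    ((measurable_fenchelConjugate Ψ).sub (measurable_fenchelConjugate Φ))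
  have hξ_integrable {h : E → E} (hh : AEMeasurable h μ) : Integrable (ξ ∘ h) μ :=
    .of_bound (hξ.comp_aemeasurable hh).aestronglyMeasurable 1 <| .of_forall fun _ => by
      obtain ⟨h0, h1⟩ := (EReal.orderEmbeddingUnitInterval _).2
      simpa [abs_le, ι] using ⟨by linarith, h1⟩
  have hfm := aemeasurable_of_ae_hasGradientAt hf
  have hgm := aemeasurable_of_ae_hasGradientAt hg
  have hle : ξ ∘ g ≤ᵐ[μ] ξ ∘ f := by
    filter_upwards [hf, hg] with x hfx hgx
    exact hι.monotone ((hΨ.fenchelConjugate_sub_le_coe_sub hgx Φ).trans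
      (hΦ.coe_sub_le_fenchelConjugate_sub hfx Ψ))
  have hint : ∫ x, ξ (g x) ∂μ = ∫ x, ξ (f x) ∂μ := by
    rw [← integral_map hgm hξ.aestronglyMeasurable, ← hmap,
      integral_map hfm hξ.aestronglyMeasurable]
  have heq := (integral_eq_iff_of_ae_le (hξ_integrable hgm) (hξ_integrable hfm) hle).1 hint
  filter_upwards [heq, hf, hg] with x hx hfx hgx
  refine (hfx.eq_of_fenchelConjugate_sub_eq hΨ hgx (le_antisymm
    (hΨ.fenchelConjugate_sub_le_coe_sub hgx Φ) (hι.le_iff_le.1 ?_))).symm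
  exact (hι.monotone (hΦ.coe_sub_le_fenchelConjugate_sub hfx Ψ)).trans_eq hx.symm

end GradientPushforward

theorem stmt_13_general {d : ℕ} {Ω : Type*} [MeasurableSpace Ω]
    (P : Measure Ω)
    (μ : Measure (EuclideanSpace ℝ (Fin d))) [IsProbabilityMeasure μ]
    (hac : μ ≪ volume)
    (X Z : Ω → EuclideanSpace ℝ (Fin d))
    (U : Ω → EuclideanSpace ℝ (Fin d)) (hU : Measurable U) (hUlaw : P.map U = μ)
    (QX QZ : EuclideanSpace ℝ (Fin d) → EuclideanSpace ℝ (Fin d))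
    (VX VZ : EuclideanSpace ℝ (Fin d) → ℝ)
    (hVX : ConvexOn ℝ Set.univ VX) (hVZ : ConvexOn ℝ Set.univ VZ)
    (hQX : ∀ᵐ u ∂μ, QX u = gradient VX u) (hQZ : ∀ᵐ u ∂μ, QZ u = gradient VZ u)
    (hXU : ∀ᵐ ω ∂P, X ω = QX (U ω)) (hZU : ∀ᵐ ω ∂P, Z ω = QZ (U ω))
    (QXZ : EuclideanSpace ℝ (Fin d) → EuclideanSpace ℝ (Fin d))
    (W : EuclideanSpace ℝ (Fin d) → ℝ) (hW : ConvexOn ℝ Set.univ W)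
    (hQXZ : ∀ᵐ u ∂μ, QXZ u = gradient W u)
    (hpushXZ : μ.map QXZ = P.map (fun ω => X ω + Z ω)) :
    ∃ V : EuclideanSpace ℝ (Fin d) → ℝ, ConvexOn ℝ Set.univ V ∧
      ∀ᵐ u ∂μ, QXZ u - QX u = gradient V u := by
  have hasGradientAt_of_ae_eq {V : EuclideanSpace ℝ (Fin d) → ℝ} (hV : ConvexOn ℝ univ V)
      {Q : EuclideanSpace ℝ (Fin d) → EuclideanSpace ℝ (Fin d)} (hQ : ∀ᵐ u ∂μ, Q u = gradient V u) :
      ∀ᵐ u ∂μ, HasGradientAt V (Q u) u := by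
    filter_upwards [hac.ae_le hV.ae_differentiableAt, hQ] with u hu hQu
    exact hQu ▸ hu.hasGradientAt
  have hsum : ∀ᵐ u ∂μ, HasGradientAt (VX + VZ) ((QX + QZ) u) u := by
    filter_upwards [hasGradientAt_of_ae_eq hVX hQX, hasGradientAt_of_ae_eq hVZ hQZ] with u hX hZ
    exact hX.add hZ
  have hmap : μ.map QXZ = μ.map (QX + QZ) := by
    have hsum_meas : AEMeasurable (QX + QZ) (P.map U) :=
      hUlaw ▸ aemeasurable_of_ae_hasGradientAt hsum
    rw [hpushXZ, ← hUlaw, hsum_meas.map_map_of_aemeasurable hU.aemeasurable]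
    exact Measure.map_congr (by filter_upwards [hXU, hZU] with ω hX hZ; simp [hX, hZ])
  have hQXZ_eq := ae_eq_of_map_eq_of_ae_hasGradientAt hW (hVX.add hVZ)
    (hasGradientAt_of_ae_eq hW hQXZ) hsum hmap
  refine ⟨VZ, hVZ, ?_⟩
  filter_upwards [hQXZ_eq, hQZ] with u hu hZ
  simp [hu, hZ]

/-- if X and Z are μ-comonotonic random vectors (X = Q_X(U), Z = Q_Z(U)
for a common U =_d μ), then X is μ-Bickel-Lehmann less dispersed than X + Z: the
difference Q_{X+Z} - Q_X between the μ-quantile of X+Z and that of X is μ-a.e. the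
gradient of a convex function. -/
theorem stmt_13 {d : ℕ} {Ω : Type*} [MeasurableSpace Ω]
    (P : Measure Ω) [IsProbabilityMeasure P]
    (μ : Measure (EuclideanSpace ℝ (Fin d))) [IsProbabilityMeasure μ]
    (hac : μ ≪ volume) (hμ2 : MemLp id 2 μ)
    (X Z : Ω → EuclideanSpace ℝ (Fin d))
    (U : Ω → EuclideanSpace ℝ (Fin d)) (hU : Measurable U) (hUlaw : P.map U = μ)
    (QX QZ : EuclideanSpace ℝ (Fin d) → EuclideanSpace ℝ (Fin d))
    (VX VZ : EuclideanSpace ℝ (Fin d) → ℝ)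
    (hVX : ConvexOn ℝ Set.univ VX) (hVZ : ConvexOn ℝ Set.univ VZ)
    (hQX : ∀ᵐ u ∂μ, QX u = gradient VX u) (hQZ : ∀ᵐ u ∂μ, QZ u = gradient VZ u)
    (hpushX : μ.map QX = P.map X) (hpushZ : μ.map QZ = P.map Z)
    (hXU : ∀ᵐ ω ∂P, X ω = QX (U ω)) (hZU : ∀ᵐ ω ∂P, Z ω = QZ (U ω))
    (QXZ : EuclideanSpace ℝ (Fin d) → EuclideanSpace ℝ (Fin d))
    (W : EuclideanSpace ℝ (Fin d) → ℝ) (hW : ConvexOn ℝ Set.univ W)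
    (hQXZ : ∀ᵐ u ∂μ, QXZ u = gradient W u)
    (hpushXZ : μ.map QXZ = P.map (fun ω => X ω + Z ω)) :
    ∃ V : EuclideanSpace ℝ (Fin d) → ℝ, ConvexOn ℝ Set.univ V ∧
      ∀ᵐ u ∂μ, QXZ u - QX u = gradient V u :=
  stmt_13_general P μ hac X Z U hU hUlaw QX QZ VX VZ hVX hVZ hQX hQZ hXU hZU QXZ W hW hQXZ hpushXZ
end

section
/- Let φ(x) = x + ψ(x) where ψ: R^d → R^d is differentiable and its Jacobian J_ψ(x) has only nonnegative real eigenvalues and satisfies J_φ(x)^T J_φ(x) - I ⪰ 0 for all x. Then φ is an expansion: ‖φ(x) - φ(x')‖ ≥ ‖x - x'‖ for all x, x'. -/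
/-!
For `c < 1`, the inverse function theorem applied uniformly on compact sets shows that at some
scale `δ` the map `φ` is a local homeomorphism with `c⁻¹`-Lipschitz local inverses. Discrete paths
with steps small compared to `δ` can then be lifted step by step, and lifts of nearby paths stay
close. Lifting the straight-line homotopy between `φ` of the segment `[a, b]` and the segment
`[φ a, φ b]` (a discrete monodromy argument, as in Hadamard's global inverse theorem) shows that
the lift of `[φ a, φ b]` starting at `a` ends at `b`; its length is at most `c⁻¹ ‖φ a - φ b‖`.
-/

open Metric

section DiscreteLifting

variable {X Y : Type*} [MetricSpace X] [PseudoMetricSpace Y]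

/-- A uniform-scale version of "local homeomorphism with `c⁻¹`-Lipschitz local inverses". -/
def LocallyExpandingOn (φ : X → Y) (c δ : ℝ) (K : Set X) : Prop :=
  ∀ z ∈ K, (∀ u ∈ closedBall z δ, ∀ v ∈ closedBall z δ, c * dist u v ≤ dist (φ u) (φ v)) ∧
    closedBall (φ z) (c * δ) ⊆ φ '' closedBall z δ

def IsDiscreteLift (φ : X → Y) (c : ℝ) (n : ℕ) (q : ℕ → Y) (z : ℕ → X) : Prop :=
  (∀ i ≤ n, φ (z i) = q i) ∧ ∀ i < n, c * dist (z i) (z (i + 1)) ≤ dist (q i) (q (i + 1))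

variable {φ : X → Y} {c δ h R : ℝ} {n : ℕ} {q q' : ℕ → Y} {z z' : ℕ → X} {a : X}

lemma IsDiscreteLift.mul_dist_le (hz : IsDiscreteLift φ c n q z) (hc : 0 ≤ c)
    (hstep : ∀ i < n, dist (q i) (q (i + 1)) ≤ h) : ∀ i ≤ n, c * dist (z 0) (z i) ≤ i * h := by
  intro i hi
  induction i with
  | zero => simp
  | succ i ih =>
    calc c * dist (z 0) (z (i + 1)) ≤ c * dist (z 0) (z i) + c * dist (z i) (z (i + 1)) := by
          rw [← mul_add]; exact mul_le_mul_of_nonneg_left (dist_triangle _ _ _) hc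
      _ ≤ i * h + h := add_le_add (ih (by omega)) ((hz.2 i hi).trans (hstep i hi))
      _ = (i + 1 : ℕ) * h := by push_cast; ring

lemma IsDiscreteLift.mem_closedBall (hz : IsDiscreteLift φ c n q z) (hc : 0 < c)
    (hstep : ∀ i < n, dist (q i) (q (i + 1)) ≤ h) (hlen : n * h ≤ c * R) :
    ∀ i ≤ n, z i ∈ closedBall (z 0) R := by
  intro i hi
  have hih : (i : ℝ) * h ≤ n * h := by
    rcases hi.lt_or_eq with hi | rfl
    · exact mul_le_mul_of_nonneg_right (by exact_mod_cast hi.le) (dist_nonneg.trans (hstep i hi))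
    · exact le_rfl
  rw [Metric.mem_closedBall, dist_comm]
  exact le_of_mul_le_mul_left ((hz.mul_dist_le hc.le hstep i hi).trans (hih.trans hlen)) hc

lemma LocallyExpandingOn.exists_isDiscreteLift (hloc : LocallyExpandingOn φ c δ (closedBall a R))
    (hc : 0 < c) (hq0 : q 0 = φ a) (hstep : ∀ i < n, dist (q i) (q (i + 1)) ≤ h)
    (hh : h ≤ c * δ) (hlen : n * h ≤ c * R) : ∃ z, z 0 = a ∧ IsDiscreteLift φ c n q z := by
  induction n with
  | zero => exact ⟨fun _ => a, rfl, fun i hi => by rw [Nat.le_zero.1 hi, hq0], by simp⟩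
  | succ n ih =>
    have hh0 : 0 ≤ h := dist_nonneg.trans (hstep 0 n.succ_pos)
    have hstep' : ∀ i < n, dist (q i) (q (i + 1)) ≤ h := fun i hi => hstep i (by omega)
    obtain ⟨z, hz0, hz⟩ := ih hstep' (by push_cast at hlen; linarith)
    have hzn : z n ∈ closedBall a R := by
      rw [← hz0]; exact hz.mem_closedBall hc hstep' (by push_cast at hlen; linarith) n le_rfl
    obtain ⟨hexp, hcov⟩ := hloc _ hzn
    have hqn : q (n + 1) ∈ closedBall (φ (z n)) (c * δ) := by
      rw [hz.1 n le_rfl, mem_closedBall, dist_comm]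
      exact (hstep n n.lt_succ_self).trans hh
    obtain ⟨w, hw, hwq⟩ := hcov hqn
    have hδ : 0 ≤ δ :=
      nonneg_of_mul_nonneg_right ((dist_nonneg.trans (hstep n n.lt_succ_self)).trans hh) hc
    refine ⟨Function.update z (n + 1) w, by simp [hz0], fun i hi => ?_, fun i hi => ?_⟩
    · rcases hi.lt_or_eq with hi | rfl
      · rw [Function.update_of_ne (by omega)]; exact hz.1 i (by omega)
      · rw [Function.update_self, hwq]
    · rcases (Nat.lt_succ_iff.1 hi).lt_or_eq with hi | rfl
      · rw [Function.update_of_ne (by omega), Function.update_of_ne (by omega)]; exact hz.2 i hi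
      · rw [Function.update_of_ne (by omega), Function.update_self, ← hz.1 i le_rfl, ← hwq]
        exact hexp _ (mem_closedBall_self hδ) _ hw

lemma LocallyExpandingOn.mul_dist_le_of_isDiscreteLift
    (hloc : LocallyExpandingOn φ c δ (closedBall a R)) (hc : 0 < c)
    (hz : IsDiscreteLift φ c n q z) (hz' : IsDiscreteLift φ c n q' z') (hz0 : z 0 = a)
    (hz'0 : z' 0 = a) (hstep : ∀ i < n, dist (q i) (q (i + 1)) ≤ h)
    (hstep' : ∀ i < n, dist (q' i) (q' (i + 1)) ≤ h) (hh : h ≤ c * δ / 4)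
    (hlen : n * h ≤ c * R) (hclose : ∀ i ≤ n, dist (q i) (q' i) ≤ c * δ / 2) :
    ∀ i ≤ n, c * dist (z i) (z' i) ≤ dist (q i) (q' i) := by
  intro i hi
  induction i with
  | zero => simp [hz0, hz'0]
  | succ i ih =>
    have hzz' : c * dist (z i) (z' i) ≤ c * (δ / 2) :=
      (ih (by omega)).trans ((hclose i (by omega)).trans_eq (by ring))
    have hzi : c * dist (z i) (z (i + 1)) ≤ c * (δ / 4) :=
      ((hz.2 i hi).trans (hstep i hi)).trans (hh.trans_eq (by ring))
    have hz'i : c * dist (z' i) (z' (i + 1)) ≤ c * (δ / 4) :=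
      ((hz'.2 i hi).trans (hstep' i hi)).trans (hh.trans_eq (by ring))
    have hnext : dist (z (i + 1)) (z' (i + 1)) ≤ δ := by
      have := dist_triangle4 (z (i + 1)) (z i) (z' i) (z' (i + 1))
      rw [dist_comm (z (i + 1)) (z i)] at this
      linarith [le_of_mul_le_mul_left hzz' hc, le_of_mul_le_mul_left hzi hc,
        le_of_mul_le_mul_left hz'i hc]
    have hmem : z (i + 1) ∈ closedBall a R := hz0 ▸ hz.mem_closedBall hc hstep hlen _ hi
    have hexp := (hloc _ hmem).1 _ (mem_closedBall_self (dist_nonneg.trans hnext)) _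
      (by rwa [Metric.mem_closedBall, dist_comm])
    rwa [hz.1 _ hi, hz'.1 _ hi] at hexp

lemma LocallyExpandingOn.eq_of_isDiscreteLift_of_homotopy
    (hloc : LocallyExpandingOn φ c δ (closedBall a R)) (hc : 0 < c) {m : ℕ} (Q : ℕ → ℕ → Y)
    (hQ0 : ∀ k ≤ m, Q k 0 = φ a) (hQn : ∀ k ≤ m, Q k n = Q 0 n)
    (hstep : ∀ k ≤ m, ∀ i < n, dist (Q k i) (Q k (i + 1)) ≤ h) (hh : h ≤ c * δ / 4)
    (hlen : n * h ≤ c * R) (hcross : ∀ k < m, ∀ i ≤ n, dist (Q k i) (Q (k + 1) i) ≤ c * δ / 2)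
    (hz : IsDiscreteLift φ c n (Q 0) z) (hz0 : z 0 = a)
    (hz' : IsDiscreteLift φ c n (Q m) z') (hz'0 : z' 0 = a) : z' n = z n := by
  rcases n.eq_zero_or_pos with rfl | hn
  · rw [hz0, hz'0]
  have hcδ : 0 ≤ c * δ := by linarith [dist_nonneg.trans (hstep 0 (Nat.zero_le m) 0 hn)]
  have hend : ∀ {k k'} {w w' : ℕ → X}, k ≤ m → k' ≤ m → IsDiscreteLift φ c n (Q k) w →
      IsDiscreteLift φ c n (Q k') w' → w 0 = a → w' 0 = a →
      (∀ i ≤ n, dist (Q k i) (Q k' i) ≤ c * δ / 2) → w n = w' n := by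
    intro k k' w w' hk hk' hw hw' hw0 hw'0 hclose
    have := hloc.mul_dist_le_of_isDiscreteLift hc hw hw' hw0 hw'0 (hstep k hk) (hstep k' hk') hh
      hlen hclose n le_rfl
    rw [hQn k hk, hQn k' hk', dist_self] at this
    exact dist_le_zero.1 (nonpos_of_mul_nonpos_right this hc)
  suffices ∀ k ≤ m, ∀ w, w 0 = a → IsDiscreteLift φ c n (Q k) w → w n = z n from
    this m le_rfl z' hz'0 hz'
  intro k
  induction k with
  | zero =>
    intro _ w hw0 hw
    exact hend m.zero_le m.zero_le hw hz hw0 hz0 fun i _ => by rw [dist_self]; linarith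
  | succ k ih =>
    intro hk w hw0 hw
    obtain ⟨v, hv0, hv⟩ := hloc.exists_isDiscreteLift hc (hQ0 k (by omega)) (hstep k (by omega))
      (by linarith) hlen
    rw [← ih (by omega) v hv0 hv]
    exact hend hk (by omega) hw hv hw0 hv0 fun i hi => by
      rw [dist_comm]; exact hcross k hk i hi

end DiscreteLifting

section DiscreteSegment

open AffineMap

variable {F : Type*} [NormedAddCommGroup F] [NormedSpace ℝ F]

noncomputable def discreteSegment (a b : F) (n : ℕ) (i : ℕ) : F := lineMap a b ((i : ℝ) / n)

@[simp]
lemma discreteSegment_zero (a b : F) (n : ℕ) : discreteSegment a b n 0 = a := by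
  simp [discreteSegment]

lemma discreteSegment_self (a b : F) {n : ℕ} (hn : n ≠ 0) : discreteSegment a b n n = b := by
  simp [discreteSegment, hn]

@[simp]
lemma discreteSegment_same (a : F) (n i : ℕ) : discreteSegment a a n i = a := by
  simp [discreteSegment]

lemma dist_discreteSegment_succ (a b : F) (n i : ℕ) :
    dist (discreteSegment a b n i) (discreteSegment a b n (i + 1)) = dist a b / n := by
  rw [discreteSegment, discreteSegment, dist_lineMap_lineMap, Real.dist_eq]
  push_cast
  rw [show (i : ℝ) / n - (i + 1) / n = -(1 / n) by ring, abs_neg, abs_of_nonneg (by positivity)]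
  ring

lemma dist_left_discreteSegment_le (a b : F) {n i : ℕ} (hi : i ≤ n) :
    dist a (discreteSegment a b n i) ≤ dist a b := by
  rw [discreteSegment, dist_left_lineMap, Real.norm_of_nonneg (by positivity)]
  exact mul_le_of_le_one_left dist_nonneg (div_le_one_of_le₀ (by exact_mod_cast hi) n.cast_nonneg)

lemma dist_discreteSegment_discreteSegment_le (a b a' b' : F) {n k : ℕ} (hk : k ≤ n) :
    dist (discreteSegment a b n k) (discreteSegment a' b' n k) ≤ dist a a' + dist b b' := by
  set t : ℝ := (k : ℝ) / n
  have ht0 : 0 ≤ t := by positivity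
  have ht1 : t ≤ 1 := div_le_one_of_le₀ (by exact_mod_cast hk) n.cast_nonneg
  have hsub : discreteSegment a b n k - discreteSegment a' b' n k
      = (1 - t) • (a - a') + t • (b - b') := by
    simp only [discreteSegment, lineMap_apply_module]; module
  rw [dist_eq_norm, hsub, dist_eq_norm, dist_eq_norm]
  refine (norm_add_le _ _).trans ?_
  rw [norm_smul, norm_smul, Real.norm_of_nonneg (by linarith), Real.norm_of_nonneg ht0]
  nlinarith [norm_nonneg (a - a'), norm_nonneg (b - b')]

end DiscreteSegment

section LocalInverse

open scoped NNReal

variable {E F : Type*} [NormedAddCommGroup E] [NormedSpace ℝ E] [NormedAddCommGroup F]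
  [NormedSpace ℝ F]

lemma ApproximatesLinearOn.mul_dist_le {f : E → F} {A : E →L[ℝ] F} {s : Set E} {ε : ℝ≥0}
    (hf : ApproximatesLinearOn f A s ε) (hA : ∀ v, ‖v‖ ≤ ‖A v‖) {u v : E} (hu : u ∈ s)
    (hv : v ∈ s) : (1 - ε) * dist u v ≤ dist (f u) (f v) := by
  have happrox := hf u hu v hv
  have hexp := hA (u - v)
  have htri : ‖A (u - v)‖ - ‖f u - f v‖ ≤ ‖f u - f v - A (u - v)‖ := by
    rw [norm_sub_rev (f u - f v)]; exact norm_sub_norm_le _ _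
  rw [dist_eq_norm, dist_eq_norm]
  linarith

lemma ApproximatesLinearOn.closedBall_subset_image [FiniteDimensional ℝ E] {f : E → E}
    {A : E →L[ℝ] E} {z : E} {δ : ℝ} {ε : ℝ≥0} (hf : ApproximatesLinearOn f A (closedBall z δ) ε)
    (hA : ∀ v, ‖v‖ ≤ ‖A v‖) (hδ : 0 ≤ δ) :
    closedBall (f z) ((1 - ε) * δ) ⊆ f '' closedBall z δ := by
  have hinj : Function.Injective A := fun v w hvw => by
    simpa [sub_eq_zero, hvw] using hA (v - w)
  choose g hg using LinearMap.surjective_of_injective (f := (A : E →ₗ[ℝ] E)) hinj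
  let g' : A.NonlinearRightInverse :=
    { toFun := g, nnnorm := 1, right_inv' := hg
      bound' := fun y => by
        rw [NNReal.coe_one, one_mul]; exact (hA (g y)).trans_eq (congrArg norm (hg y)) }
  simpa [g', Set.SurjOn] using hf.surjOn_closedBall_of_nonlinearRightInverse g' hδ subset_rfl

lemma ContDiff.exists_approximatesLinearOn_fderiv {f : E → F} (hf : ContDiff ℝ 1 f) {K : Set E}
    (hK : IsCompact K) {ε : ℝ≥0} (hε : 0 < ε) :
    ∃ δ > 0, ∀ z ∈ K, ApproximatesLinearOn f (fderiv ℝ f z) (closedBall z δ) ε := by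
  obtain ⟨δ, hδ, hclose⟩ := Metric.mem_uniformity_dist.1 <|
    hK.uniformContinuousAt_of_continuousAt (fderiv ℝ f)
      (fun x _ => (hf.continuous_fderiv one_ne_zero).continuousAt) (dist_mem_uniformity hε)
  refine ⟨δ / 2, half_pos hδ, fun z hz => ?_⟩
  rw [ApproximatesLinearOn.approximatesLinearOn_iff_lipschitzOnWith]
  refine (convex_closedBall z (δ / 2)).lipschitzOnWith_of_nnnorm_hasFDerivWithin_le
    (f' := fun w => fderiv ℝ f w - fderiv ℝ f z)
    (fun w _ => ((hf.differentiable one_ne_zero w).hasFDerivAt.sub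
      (fderiv ℝ f z).hasFDerivAt).hasFDerivWithinAt) (fun w hw => ?_)
  have hzw := closedBall_subset_ball (half_lt_self hδ) hw
  rw [mem_ball, dist_comm] at hzw
  rw [← NNReal.coe_le_coe, coe_nnnorm, ← dist_eq_norm, dist_comm]
  exact (hclose hzw hz).le

lemma ContDiff.exists_locallyExpandingOn [FiniteDimensional ℝ E] {φ : E → E}
    (hφ : ContDiff ℝ 1 φ) (hD : ∀ x v, ‖v‖ ≤ ‖fderiv ℝ φ x v‖) {K : Set E} (hK : IsCompact K)
    {c : ℝ} (hc : c < 1) : ∃ δ > 0, LocallyExpandingOn φ c δ K := by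
  obtain ⟨δ, hδ, happrox⟩ :=
    hφ.exists_approximatesLinearOn_fderiv hK (ε := (1 - c).toNNReal) (by simpa using hc)
  have hε : ((1 - c).toNNReal : ℝ) = 1 - c := Real.coe_toNNReal _ (by linarith)
  refine ⟨δ, hδ, fun z hz => ⟨fun u hu v hv => ?_, ?_⟩⟩
  · simpa [hε] using (happrox z hz).mul_dist_le (hD z) hu hv
  · simpa [hε] using (happrox z hz).closedBall_subset_image (hD z) hδ.le

end LocalInverse

section Expansion

open scoped NNReal

variable {E : Type*} [NormedAddCommGroup E] [NormedSpace ℝ E] {a b : E} {c δ R : ℝ}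

lemma LocallyExpandingOn.isDiscreteLift_discreteSegment {Y : Type*} [PseudoMetricSpace Y]
    {φ : E → Y} {n : ℕ} (hloc : LocallyExpandingOn φ c δ (closedBall a R)) (hR : dist a b ≤ R)
    (hn : dist a b / n ≤ δ) :
    IsDiscreteLift φ c n (fun i => φ (discreteSegment a b n i)) (discreteSegment a b n) := by
  refine ⟨fun _ _ => rfl, fun i hi => ?_⟩
  have hmem : discreteSegment a b n i ∈ closedBall a R := by
    rw [mem_closedBall, dist_comm]; exact (dist_left_discreteSegment_le _ _ hi.le).trans hR
  have hstep := dist_discreteSegment_succ a b n i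
  have hδ : 0 ≤ δ := (div_nonneg dist_nonneg n.cast_nonneg).trans hn
  exact (hloc _ hmem).1 _ (mem_closedBall_self hδ) _
    (by rw [mem_closedBall, dist_comm, hstep]; exact hn)

lemma LocallyExpandingOn.eq_of_isDiscreteLift_discreteSegment {F : Type*}
    [NormedAddCommGroup F] [NormedSpace ℝ F] {φ : E → F} {K : ℝ≥0} {n : ℕ} {z : ℕ → E}
    (hloc : LocallyExpandingOn φ c δ (closedBall a R)) (hc : 0 < c) (hn : n ≠ 0)
    (hlip : LipschitzOnWith K φ (closedBall a (dist a b))) (hdR : dist a b ≤ R)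
    (hLR : K * dist a b + dist (φ a) (φ b) ≤ c * R) (hdn : dist a b / n ≤ δ)
    (hLn : (K * dist a b + dist (φ a) (φ b)) / n ≤ c * δ / 4)
    (hz : IsDiscreteLift φ c n (discreteSegment (φ a) (φ b) n) z) (hz0 : z 0 = a) : z n = b := by
  set d := dist a b
  set L := K * d + dist (φ a) (φ b)
  have hn0 : (0 : ℝ) < n := by positivity
  have hcδ : 0 ≤ c * δ / 4 := le_trans (by positivity) hLn
  set γ := discreteSegment a b n
  set s := discreteSegment (φ a) (φ b) n
  set Q : ℕ → ℕ → F := fun k i => discreteSegment (φ (γ i)) (s i) n k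
  have hγ : ∀ i ≤ n, γ i ∈ closedBall a d := fun i hi => by
    rw [mem_closedBall, dist_comm]; exact dist_left_discreteSegment_le _ _ hi
  have hγn : γ n = b := discreteSegment_self _ _ hn
  have hQstep : ∀ k ≤ n, ∀ i < n, dist (Q k i) (Q k (i + 1)) ≤ L / n := by
    intro k hk i hi
    refine (dist_discreteSegment_discreteSegment_le _ _ _ _ hk).trans ?_
    rw [dist_discreteSegment_succ, add_div]
    gcongr
    calc dist (φ (γ i)) (φ (γ (i + 1))) ≤ K * dist (γ i) (γ (i + 1)) :=
          hlip.dist_le_mul _ (hγ i hi.le) _ (hγ (i + 1) hi)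
      _ = K * d / n := by rw [dist_discreteSegment_succ]; ring
  have hQcross : ∀ k < n, ∀ i ≤ n, dist (Q k i) (Q (k + 1) i) ≤ c * δ / 2 := by
    intro k _ i hi
    rw [dist_discreteSegment_succ]
    have hpa : dist (φ (γ i)) (φ a) ≤ K * d := by
      refine (hlip.dist_le_mul _ (hγ i hi) _ (mem_closedBall_self dist_nonneg)).trans ?_
      gcongr
      exact hγ i hi
    have hps : dist (φ (γ i)) (s i) ≤ L :=
      (dist_triangle _ (φ a) _).trans (add_le_add hpa (dist_left_discreteSegment_le _ _ hi))
    exact (div_le_div_of_nonneg_right hps hn0.le).trans (hLn.trans (by linarith))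
  have hQs : Q n = s := funext fun i => discreteSegment_self _ _ hn
  rw [← hγn]
  refine hloc.eq_of_isDiscreteLift_of_homotopy hc Q (fun k _ => by simp [Q, γ, s])
    (fun k _ => by simp [Q, hγn, s, discreteSegment_self _ _ hn]) hQstep hLn
    (by rwa [mul_div_cancel₀ _ hn0.ne']) hQcross ?_ (discreteSegment_zero _ _ _) (hQs ▸ hz) hz0
  simpa [Q] using hloc.isDiscreteLift_discreteSegment hdR hdn

lemma LocallyExpandingOn.mul_dist_le_dist {F : Type*} [NormedAddCommGroup F]
    [NormedSpace ℝ F] {φ : E → F} {K : ℝ≥0} (hloc : LocallyExpandingOn φ c δ (closedBall a R))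
    (hc : 0 < c) (hc1 : c ≤ 1) (hδ : 0 < δ) (hlip : LipschitzOnWith K φ (closedBall a (dist a b)))
    (hdR : dist a b ≤ R) (hLR : K * dist a b + dist (φ a) (φ b) ≤ c * R) :
    c * dist a b ≤ dist (φ a) (φ b) := by
  set d := dist a b
  set T := dist (φ a) (φ b)
  set L := K * d + T
  have hd0 : 0 ≤ d := dist_nonneg
  have hcδ : 0 < c * δ := by positivity
  obtain ⟨n, hn⟩ := exists_nat_gt ((L + d) / (c * δ / 4))
  have hn0 : (0 : ℝ) < n := lt_of_le_of_lt (by positivity) hn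
  have hLd : (L + d) / n ≤ c * δ / 4 := by
    rw [div_lt_iff₀ (by positivity)] at hn; rw [div_le_iff₀ hn0]; linarith
  have hTL : T ≤ L := le_add_of_nonneg_left (by positivity)
  have hLn : L / n ≤ c * δ / 4 :=
    (div_le_div_of_nonneg_right (le_add_of_nonneg_right hd0) hn0.le).trans hLd
  have hTn : T / n ≤ c * δ / 4 := (div_le_div_of_nonneg_right hTL hn0.le).trans hLn
  have hdn : d / n ≤ δ :=
    (div_le_div_of_nonneg_right (le_add_of_nonneg_left (by positivity)) hn0.le).trans
      (hLd.trans (by nlinarith))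
  have hsteps : ∀ i < n, dist (discreteSegment (φ a) (φ b) n i)
      (discreteSegment (φ a) (φ b) n (i + 1)) ≤ T / n := fun i _ =>
    (dist_discreteSegment_succ _ _ _ _).le
  obtain ⟨z, hz0, hz⟩ := hloc.exists_isDiscreteLift hc (discreteSegment_zero _ _ _) hsteps
    (hTn.trans (by linarith)) (by rw [mul_div_cancel₀ _ hn0.ne']; linarith)
  have hzb := hloc.eq_of_isDiscreteLift_discreteSegment hc (by exact_mod_cast hn0.ne') hlip hdR
    hLR hdn hLn hz hz0
  have hlen := hz.mul_dist_le hc.le hsteps n le_rfl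
  rwa [hz0, hzb, mul_div_cancel₀ _ hn0.ne'] at hlen

end Expansion

theorem antilipschitzWith_one_of_norm_le_norm_fderiv_apply {E : Type*}
    [NormedAddCommGroup E] [NormedSpace ℝ E] [FiniteDimensional ℝ E] {φ : E → E}
    (hφ : ContDiff ℝ 1 φ) (hD : ∀ x v, ‖v‖ ≤ ‖fderiv ℝ φ x v‖) : AntilipschitzWith 1 φ := by
  refine AntilipschitzWith.of_le_mul_dist fun a b => ?_
  obtain ⟨K, hlip⟩ := hφ.locallyLipschitz.locallyLipschitzOn.exists_lipschitzOnWith_of_compact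
    (isCompact_closedBall a (dist a b))
  rw [NNReal.coe_one, one_mul, ← coe_nndist, ← coe_nndist, NNReal.coe_le_coe]
  refine NNReal.le_of_forall_lt_one_mul_le fun c hc1 => ?_
  rcases eq_zero_or_pos c with rfl | hc
  · simp
  rw [← NNReal.coe_le_coe, NNReal.coe_mul, coe_nndist, coe_nndist]
  set R := dist a b + (K * dist a b + dist (φ a) (φ b)) / c
  obtain ⟨δ, hδ, hloc⟩ := hφ.exists_locallyExpandingOn hD (isCompact_closedBall a R)
    (c := c) (by exact_mod_cast hc1)
  refine hloc.mul_dist_le_dist hc (by exact_mod_cast hc1.le) hδ hlip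
    (le_add_of_nonneg_right (by positivity)) ?_
  rw [mul_add, mul_div_cancel₀ _ (by positivity)]
  exact le_add_of_nonneg_left (by positivity)

theorem stmt_16_general {d : ℕ}
    (ψ φ : EuclideanSpace ℝ (Fin d) → EuclideanSpace ℝ (Fin d))
    (hψ : ContDiff ℝ 1 ψ) (hφ : φ = fun x => x + ψ x)
    (hpsd : ∀ x v, ‖v‖ ≤ ‖fderiv ℝ φ x v‖) :
    ∀ x x', ‖x - x'‖ ≤ ‖φ x - φ x'‖ := by
  have hφC : ContDiff ℝ 1 φ := by
    rw [hφ]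
    exact contDiff_id.add hψ
  intro x x'
  simpa [dist_eq_norm] using
    (antilipschitzWith_one_of_norm_le_norm_fderiv_apply hφC hpsd).le_mul_dist x x'

/-- let φ(x) = x + ψ(x) where ψ is continuously differentiable, the
Jacobian of ψ has only nonnegative real eigenvalues, and J_φ(x)ᵀ J_φ(x) - I ⪰ 0 for all
x (equivalently ‖J_φ(x) v‖ ≥ ‖v‖ for all v). Then φ is an expansion:
‖φ(x) - φ(x')‖ ≥ ‖x - x'‖ for all x, x'. -/
theorem stmt_16 {d : ℕ}
    (ψ φ : EuclideanSpace ℝ (Fin d) → EuclideanSpace ℝ (Fin d))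
    (hψ : ContDiff ℝ 1 ψ) (hφ : φ = fun x => x + ψ x)
    (heig : ∀ x, ∀ lam ∈ spectrum ℝ (fderiv ℝ ψ x), 0 ≤ lam)
    (hpsd : ∀ x v, ‖v‖ ≤ ‖fderiv ℝ φ x v‖) :
    ∀ x x', ‖x - x'‖ ≤ ‖φ x - φ x'‖ :=
  stmt_16_general ψ φ hψ hφ hpsd
end
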